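/- If A is an operator satisfying A γ₅ = γ₅ A†, and A†A is positive definite, then the Neuberger operator D = (1/ā)(1 − A (A†A)^{−1/2}) satisfies the Ginsparg-Wilson relation γ₅ D + D γ₅ = ā D γ₅ D. -/

import Mathlib

open Matrix
open scoped ComplexOrder

namespace Matrix.PosSemidef

/-- The positive semidefinite square root of a positive semidefinite matrix
(the definition Mathlib had in December 2024, since removed). -/
noncomputable def sqrt {n 𝕜 : Type*} [Fintype n] [DecidableEq n] [RCLike 𝕜]
    {A : Matrix n n 𝕜} (hA : PosSemidef A) : Matrix n n 𝕜 :=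
  hA.1.eigenvectorUnitary.1 * diagonal ((↑) ∘ (√·) ∘ hA.1.eigenvalues) *
  (star hA.1.eigenvectorUnitary : Matrix n n 𝕜)

end Matrix.PosSemidef

/-!
Put `S = √(A†A)` and `T = γ₅ A`. The relation `A γ₅ = γ₅ A†` makes `T` Hermitian with `T² = S²`.
Then `T S⁻¹ T = (S⁻¹ T)† S (S⁻¹ T)` is positive semidefinite and squares to `S²`, so by uniqueness
of positive square roots `T S⁻¹ T = S`. Equivalently `U = A S⁻¹` satisfies `U γ₅ U = γ₅`, and for
such `U` the Ginsparg–Wilson relation of `1 - U` is a ring identity.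
-/

section GinspargWilson

variable {K R : Type*} [Field K] [Ring R] [Algebra K R]

def IsGinspargWilson (γ D : R) (a : K) : Prop :=
  γ * D + D * γ = a • (D * γ * D)

theorem isGinspargWilson_inv_smul_one_sub {γ U : R} {a : K} (ha : a ≠ 0)
    (hU : U * γ * U = γ) : IsGinspargWilson γ (a⁻¹ • (1 - U)) a := by
  have h : γ * (1 - U) + (1 - U) * γ = (1 - U) * γ * (1 - U) := by
    calc γ * (1 - U) + (1 - U) * γ = γ - γ * U - U * γ + U * γ * U := by rw [hU]; noncomm_ring
      _ = (1 - U) * γ * (1 - U) := by noncomm_ring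
  simp only [IsGinspargWilson, mul_smul_comm, smul_mul_assoc, ← smul_add, h, smul_smul,
    mul_inv_cancel_left₀ ha]

end GinspargWilson

namespace Matrix

variable {n 𝕜 : Type*} [Fintype n] [DecidableEq n] [RCLike 𝕜]

namespace PosSemidef

variable {A : Matrix n n 𝕜}

lemma posSemidef_sqrt (hA : A.PosSemidef) : hA.sqrt.PosSemidef := by
  have hd : PosSemidef (diagonal ((↑) ∘ (√·) ∘ hA.1.eigenvalues : n → 𝕜)) :=
    posSemidef_diagonal_iff.mpr fun _ => RCLike.ofReal_nonneg.mpr (Real.sqrt_nonneg _)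
  simpa only [sqrt, star_eq_conjTranspose] using
    hd.mul_mul_conjTranspose_same (hA.1.eigenvectorUnitary : Matrix n n 𝕜)

lemma sqrt_mul_self (hA : A.PosSemidef) : hA.sqrt * hA.sqrt = A := by
  set V : Matrix n n 𝕜 := hA.1.eigenvectorUnitary.1
  have hV : star V * V = 1 := Unitary.star_mul_self_of_mem hA.1.eigenvectorUnitary.2
  have hsq : diagonal ((↑) ∘ (√·) ∘ hA.1.eigenvalues : n → 𝕜) *
      diagonal ((↑) ∘ (√·) ∘ hA.1.eigenvalues) = diagonal ((↑) ∘ hA.1.eigenvalues) := by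
    rw [diagonal_mul_diagonal]
    congr 1 with i
    simp [← RCLike.ofReal_mul, Real.mul_self_sqrt (hA.eigenvalues_nonneg i)]
  conv_rhs => rw [hA.1.spectral_theorem, Unitary.conjStarAlgAut_apply, ← hsq]
  simp only [sqrt, mul_assoc]
  rw [← mul_assoc (star V), hV, one_mul]

lemma isUnit_det_sqrt (hA : A.PosSemidef) (hdet : IsUnit A.det) : IsUnit hA.sqrt.det := by
  rw [← sqrt_mul_self hA, det_mul, IsUnit.mul_iff] at hdet
  exact hdet.1

open scoped MatrixOrder in
theorem eq_of_mul_self_eq {B : Matrix n n 𝕜} (hA : A.PosSemidef) (hB : B.PosSemidef)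
    (h : A * A = B * B) : A = B :=
  (CFC.mul_self_eq_mul_self_iff A B hA.nonneg hB.nonneg).mp h

end PosSemidef

theorem IsHermitian.mul_inv_mul_eq_of_mul_self_eq {T S : Matrix n n 𝕜} (hT : T.IsHermitian)
    (hS : S.PosSemidef) (hdet : IsUnit S.det) (h : T * T = S * S) : T * S⁻¹ * T = S := by
  have hpsd : (T * S⁻¹ * T).PosSemidef := by
    simpa only [conjTranspose_mul, hT.eq, conjTranspose_nonsing_inv, hS.1.eq, mul_assoc,
      mul_nonsing_inv_cancel_left _ _ hdet] using hS.conjTranspose_mul_mul_same (S⁻¹ * T)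
  refine hpsd.eq_of_mul_self_eq hS ?_
  calc T * S⁻¹ * T * (T * S⁻¹ * T) = T * S⁻¹ * (S * S) * S⁻¹ * T := by
        rw [← h]; noncomm_ring
    _ = T * T := by
        simp only [mul_assoc, mul_nonsing_inv_cancel_left _ _ hdet,
          nonsing_inv_mul_cancel_left _ _ hdet]
    _ = S * S := h

end Matrix

/-- If `A γ₅ = γ₅ A†` and `A†A` is positive definite, then the Neuberger operator
`D = (1/ā)(1 − A (A†A)^{−1/2})` satisfies the Ginsparg-Wilson relation
`γ₅ D + D γ₅ = ā D γ₅ D`. -/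
theorem neuberger_satisfies_ginsparg_wilson (n : ℕ)
    (A γ₅ : Matrix (Fin n) (Fin n) ℂ) (abar : ℝ) (habar : 0 < abar)
    (h5herm : γ₅ᴴ = γ₅) (h5sq : γ₅ * γ₅ = 1)
    (hA : A * γ₅ = γ₅ * Aᴴ)
    (hposdef : (Aᴴ * A).PosDef)
    (D : Matrix (Fin n) (Fin n) ℂ)
    (hD : D = (1 / (abar : ℂ)) •
      (1 - A * ((posSemidef_conjTranspose_mul_self A).sqrt)⁻¹)) :
    γ₅ * D + D * γ₅ = (abar : ℂ) • (D * γ₅ * D) := by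
  set hS := posSemidef_conjTranspose_mul_self A
  set S := hS.sqrt
  have hSdet : IsUnit S.det := hS.isUnit_det_sqrt (isUnit_iff_isUnit_det _ |>.mp hposdef.isUnit)
  have hAH : Aᴴ = γ₅ * A * γ₅ := by rw [mul_assoc, hA, ← mul_assoc, h5sq, one_mul]
  have hT : (γ₅ * A).IsHermitian := by
    rw [IsHermitian, conjTranspose_mul, h5herm, hAH, mul_assoc, mul_assoc, h5sq, mul_one]
  have hTT : γ₅ * A * (γ₅ * A) = S * S := by
    rw [hS.sqrt_mul_self, ← mul_assoc, mul_assoc γ₅, hA, ← mul_assoc, h5sq, one_mul]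
  have hKey := hT.mul_inv_mul_eq_of_mul_self_eq hS.posSemidef_sqrt hSdet hTT
  have hU : A * S⁻¹ * γ₅ * (A * S⁻¹) = γ₅ := by
    calc A * S⁻¹ * γ₅ * (A * S⁻¹) = γ₅ * (γ₅ * A * S⁻¹ * (γ₅ * A)) * S⁻¹ := by
          simp only [← mul_assoc, h5sq, one_mul]
      _ = γ₅ := by rw [hKey, mul_assoc, mul_nonsing_inv _ hSdet, mul_one]
  rw [hD, one_div]
  exact isGinspargWilson_inv_smul_one_sub (by exact_mod_cast habar.ne') hU
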